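/- (Explicit approximation with uniform error tolerance.) Let d ≥ 1, L ∈ [0,∞), a ∈ ℝ, b ∈ (a,∞), ε ∈ (0,∞), and let f : [a,b]^d → ℝ satisfy |f(u) − f(v)| ≤ L‖u − v‖₁ for all u, v ∈ [a,b]^d. Then there exist K ∈ ℕ with 1 ≤ K ≤ (max{1, ⌈ dL(b − a)/ε ⌉})^d and points x_1, …, x_K ∈ [a,b]^d such that sup_{x∈[a,b]^d} | max_{1≤k≤K} (f(x_k) − L‖x − x_k‖₁) − f(x) | ≤ ε. -/

import Mathlib

/-!
Split `[a,b]` into `N = max{1, ⌈dL(b−a)/ε⌉}` cells of width `δ = (b−a)/N` and take as centers the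
`N^d` midpoints of the product cells. Lipschitz continuity makes every cone
`f(x_k) − L‖x − x_k‖₁` lie below `f`, so the maximum convolution is at most `f`; the cone at the
center `x_k` of the cell containing `x` is at least `f(x) − 2L‖x − x_k‖₁ ≥ f(x) − L·d·δ ≥ f(x) − ε`.
-/

open Finset

section MaxConvolution

variable {ι σ : Type*} [Fintype σ]

noncomputable def maxConv (f : (σ → ℝ) → ℝ) (L : ℝ) (p : ι → σ → ℝ) (x : σ → ℝ) : ℝ :=
  ⨆ k, (f (p k) - L * ∑ i, |x i - p k i|)

variable {S : Set (σ → ℝ)} {f : (σ → ℝ) → ℝ} {L : ℝ} {p : ι → σ → ℝ} {x : σ → ℝ}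

theorem maxConv_le [Nonempty ι] (hf : ∀ u ∈ S, ∀ v ∈ S, |f u - f v| ≤ L * ∑ i, |u i - v i|)
    (hp : ∀ k, p k ∈ S) (hx : x ∈ S) : maxConv f L p x ≤ f x := by
  refine ciSup_le fun k => ?_
  have hcone : f (p k) - f x ≤ L * ∑ i, |p k i - x i| := (le_abs_self _).trans (hf _ (hp k) x hx)
  simp only [abs_sub_comm (p k _)] at hcone
  linarith

theorem sub_le_maxConv [Finite ι] (hf : ∀ u ∈ S, ∀ v ∈ S, |f u - f v| ≤ L * ∑ i, |u i - v i|)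
    {k : ι} (hpk : p k ∈ S) (hx : x ∈ S) :
    f x - 2 * (L * ∑ i, |x i - p k i|) ≤ maxConv f L p x := by
  have hcone : f x - f (p k) ≤ L * ∑ i, |x i - p k i| := (le_abs_self _).trans (hf x hx _ hpk)
  have hk : f (p k) - L * ∑ i, |x i - p k i| ≤ maxConv f L p x :=
    le_ciSup (f := fun k => f (p k) - L * ∑ i, |x i - p k i|) (Set.finite_range _).bddAbove k
  linarith

theorem abs_maxConv_sub_le [Finite ι] {ε : ℝ}
    (hf : ∀ u ∈ S, ∀ v ∈ S, |f u - f v| ≤ L * ∑ i, |u i - v i|) (hp : ∀ k, p k ∈ S) (hx : x ∈ S)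
    {k : ι} (hk : L * ∑ i, |x i - p k i| ≤ ε / 2) : |maxConv f L p x - f x| ≤ ε := by
  have : Nonempty ι := ⟨k⟩
  have hupper := maxConv_le hf hp hx
  have hlower := sub_le_maxConv hf (hp k) hx
  rw [abs_le]
  constructor <;> linarith

end MaxConvolution

section Grid

noncomputable def gridMidpoint (a b : ℝ) (N j : ℕ) : ℝ :=
  a + (j + 1 / 2) * ((b - a) / N)

theorem gridMidpoint_mem_Icc {a b : ℝ} (hab : a ≤ b) {N j : ℕ} (hj : j < N) :
    gridMidpoint a b N j ∈ Set.Icc a b := by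
  have hN : (0 : ℝ) < N := by exact_mod_cast (Nat.zero_le j).trans_lt hj
  have hjN : (j : ℝ) + 1 / 2 ≤ N := by
    have : (j : ℝ) + 1 ≤ N := by exact_mod_cast hj
    linarith
  have hδ : 0 ≤ (b - a) / N := div_nonneg (sub_nonneg.mpr hab) hN.le
  have hNδ : (N : ℝ) * ((b - a) / N) = b - a := mul_div_cancel₀ _ hN.ne'
  unfold gridMidpoint
  constructor <;> nlinarith

theorem exists_abs_sub_add_half_le {N : ℕ} (hN : 0 < N) {t : ℝ} (ht₀ : 0 ≤ t) (htN : t ≤ N) :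
    ∃ j : Fin N, |t - (j + 1 / 2)| ≤ 1 / 2 := by
  by_cases hfloor : ⌊t⌋₊ < N
  · refine ⟨⟨⌊t⌋₊, hfloor⟩, abs_le.mpr ⟨?_, ?_⟩⟩
    · linarith [Nat.floor_le ht₀]
    · linarith [Nat.lt_floor_add_one t]
  · have htop : (N : ℝ) ≤ t := (Nat.le_floor_iff ht₀).mp (not_lt.mp hfloor)
    refine ⟨⟨N - 1, Nat.sub_one_lt_of_lt hN⟩, abs_le.mpr ⟨?_, ?_⟩⟩ <;>
      simp only [Nat.cast_sub (Nat.one_le_iff_ne_zero.mpr hN.ne'), Nat.cast_one] <;> linarith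

theorem exists_abs_sub_gridMidpoint_le {a b : ℝ} (hab : a < b) {N : ℕ} (hN : 0 < N) {x : ℝ}
    (hx : x ∈ Set.Icc a b) : ∃ j : Fin N, |x - gridMidpoint a b N j| ≤ (b - a) / N / 2 := by
  set δ := (b - a) / N
  have hδ : 0 < δ := div_pos (sub_pos.mpr hab) (Nat.cast_pos.mpr hN)
  have hNδ : (N : ℝ) * δ = b - a := mul_div_cancel₀ _ (Nat.cast_pos.mpr hN).ne'
  obtain ⟨j, hj⟩ := exists_abs_sub_add_half_le hN (t := (x - a) / δ)
    (div_nonneg (by linarith [hx.1]) hδ.le) ((div_le_iff₀ hδ).mpr (by linarith [hx.2]))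
  refine ⟨j, ?_⟩
  have hscale : x - gridMidpoint a b N j = δ * ((x - a) / δ - (j + 1 / 2)) := by
    rw [show gridMidpoint a b N j = a + (j + 1 / 2) * δ from rfl, mul_sub, mul_div_cancel₀ _ hδ.ne']
    ring
  rw [hscale, abs_mul, abs_of_pos hδ]
  nlinarith

theorem exists_sum_abs_sub_gridMidpoint_le {σ : Type*} [Fintype σ] {a b : ℝ} (hab : a < b)
    {N : ℕ} (hN : 0 < N) {x : σ → ℝ} (hx : ∀ i, x i ∈ Set.Icc a b) :
    ∃ j : σ → Fin N,
      ∑ i, |x i - gridMidpoint a b N (j i)| ≤ Fintype.card σ * ((b - a) / N / 2) := by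
  choose j hj using fun i => exists_abs_sub_gridMidpoint_le hab hN (hx i)
  refine ⟨j, ?_⟩
  calc ∑ i, |x i - gridMidpoint a b N (j i)| ≤ ∑ _i : σ, (b - a) / N / 2 :=
        sum_le_sum fun i _ => hj i
    _ = Fintype.card σ * ((b - a) / N / 2) := by rw [sum_const, card_univ, nsmul_eq_mul]

end Grid

theorem maxConv_eps_approx_general (d : ℕ) (L : ℝ) (hL : 0 ≤ L)
    (a b : ℝ) (hab : a < b) (ε : ℝ) (hε : 0 < ε) (f : (Fin d → ℝ) → ℝ)
    (hf : ∀ u, (∀ i, u i ∈ Set.Icc a b) → ∀ v, (∀ i, v i ∈ Set.Icc a b) →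
      |f u - f v| ≤ L * ∑ i, |u i - v i|) :
    ∃ K : ℕ, 1 ≤ K ∧ K ≤ (max 1 ⌈(d : ℝ) * L * (b - a) / ε⌉₊) ^ d ∧
      ∃ pts : Fin K → (Fin d → ℝ), (∀ k, ∀ i, pts k i ∈ Set.Icc a b) ∧
        ∀ x : Fin d → ℝ, (∀ i, x i ∈ Set.Icc a b) →
          |(⨆ k : Fin K, (f (pts k) - L * ∑ i, |x i - pts k i|)) - f x| ≤ ε := by
  set N := max 1 ⌈(d : ℝ) * L * (b - a) / ε⌉₊
  have hN : 0 < N := lt_max_of_lt_left one_pos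
  have hNε : (d : ℝ) * L * (b - a) / ε ≤ N :=
    (Nat.le_ceil _).trans (by exact_mod_cast le_max_right _ _)
  have hbudget : L * (d * ((b - a) / N / 2)) ≤ ε / 2 := by
    have hN' : (0 : ℝ) < N := Nat.cast_pos.mpr hN
    rw [div_le_iff₀ hε] at hNε
    rw [show L * (d * ((b - a) / N / 2)) = d * L * (b - a) / N / 2 by ring, div_div,
      div_le_iff₀ (by positivity)]
    nlinarith
  let pts : Fin (N ^ d) → Fin d → ℝ := fun k i => gridMidpoint a b N (finFunctionFinEquiv.symm k i)
  have hpts : ∀ k i, pts k i ∈ Set.Icc a b := fun k i => gridMidpoint_mem_Icc hab.le (Fin.isLt _)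
  refine ⟨N ^ d, Nat.one_le_pow _ _ hN, le_rfl, pts, hpts, fun x hx => ?_⟩
  obtain ⟨j, hj⟩ := exists_sum_abs_sub_gridMidpoint_le hab hN hx
  have hnear : L * ∑ i, |x i - pts (finFunctionFinEquiv j) i| ≤ ε / 2 := by
    simp only [pts, Equiv.symm_apply_apply]
    rw [Fintype.card_fin] at hj
    exact (mul_le_mul_of_nonneg_left hj hL).trans hbudget
  exact abs_maxConv_sub_le (S := {u | ∀ i, u i ∈ Set.Icc a b}) hf hpts hx hnear

/-- Explicit approximation with uniform error tolerance `ε`: for an ℓ1-`L`-Lipschitz `f` on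
`[a,b]^d`, there are `K ≤ (max{1, ⌈dL(b−a)/ε⌉})^d` centers in `[a,b]^d` whose maximum
convolution approximates `f` uniformly within `ε`. -/
theorem maxConv_eps_approx (d : ℕ) (hd : 1 ≤ d) (L : ℝ) (hL : 0 ≤ L)
    (a b : ℝ) (hab : a < b) (ε : ℝ) (hε : 0 < ε) (f : (Fin d → ℝ) → ℝ)
    (hf : ∀ u, (∀ i, u i ∈ Set.Icc a b) → ∀ v, (∀ i, v i ∈ Set.Icc a b) →
      |f u - f v| ≤ L * ∑ i, |u i - v i|) :
    ∃ K : ℕ, 1 ≤ K ∧ K ≤ (max 1 ⌈(d : ℝ) * L * (b - a) / ε⌉₊) ^ d ∧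
      ∃ pts : Fin K → (Fin d → ℝ), (∀ k, ∀ i, pts k i ∈ Set.Icc a b) ∧
        ∀ x : Fin d → ℝ, (∀ i, x i ∈ Set.Icc a b) →
          |(⨆ k : Fin K, (f (pts k) - L * ∑ i, |x i - pts k i|)) - f x| ≤ ε :=
  maxConv_eps_approx_general d L hL a b hab ε hε f hf
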